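/- arXiv:1709.03231 — 2 statements merged into one kernel-verified Lean document; each statement's English description precedes it below -/
import Mathlib

section
/- For every nonempty nested set N of the cycle graph C_m, there exists a positive integer d that divides both the cardinality |N| and the number of connected components of the subgraph of C_m induced on the union ⋃_{I ∈ N} I, such that the stabilizer (D_m)_N is either cyclic of order d (generated by a rotation) or isomorphic to the dihedral group of order 2d. -/
open Pointwise

def cycleGraph (m : ℕ) : SimpleGraph (ZMod m) where
  Adj i j := i ≠ j ∧ (j = i + 1 ∨ i = j + 1)
  symm := ⟨fun i j h => ⟨h.1.symm, h.2.symm⟩⟩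
  loopless := ⟨fun i h => h.1 rfl⟩

def IsConnSubset (m : ℕ) (I : Set (ZMod m)) : Prop :=
  ((cycleGraph m).induce I).Connected

def IsNested (m : ℕ) (N : Set (Set (ZMod m))) : Prop :=
  N.Finite ∧
  (∀ I ∈ N, I.Nonempty ∧ I ≠ Set.univ ∧ IsConnSubset m I) ∧
  (∀ I ∈ N, ∀ J ∈ N, I ⊆ J ∨ J ⊆ I ∨ I ∩ J = ∅) ∧
  (∀ S : Finset (Set (ZMod m)), ↑S ⊆ N → 2 ≤ S.card →
    ((S : Set (Set (ZMod m))).Pairwise fun I J => I ∩ J = ∅) →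
    ¬ IsConnSubset m (⋃ I ∈ S, I))

def rot (m : ℕ) : Equiv.Perm (ZMod m) := Equiv.addRight 1

def cycRefl (m : ℕ) : Equiv.Perm (ZMod m) := Equiv.neg (ZMod m)

def dihedral (m : ℕ) : Subgroup (Equiv.Perm (ZMod m)) :=
  Subgroup.closure {rot m, cycRefl m}

def IsReflection (m : ℕ) (φ : Equiv.Perm (ZMod m)) : Prop :=
  φ ∈ dihedral m ∧ φ ∉ Subgroup.zpowers (rot m)

def nestedStab (m : ℕ) (N : Set (Set (ZMod m))) : Subgroup (Equiv.Perm (ZMod m)) :=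
  dihedral m ⊓ MulAction.stabilizer (Equiv.Perm (ZMod m)) N

def rotStab (m : ℕ) (N : Set (Set (ZMod m))) : Subgroup (Equiv.Perm (ZMod m)) :=
  Subgroup.zpowers (rot m) ⊓ nestedStab m N

noncomputable def alphaNum (m d k : ℕ) : ℕ :=
  {N : Set (Set (ZMod m)) | IsNested m N ∧ N.ncard = k ∧
    Nat.card (rotStab m N) = d ∧ ¬ ∃ φ ∈ nestedStab m N, IsReflection m φ}.ncard

noncomputable def betaNum (m d k : ℕ) : ℕ :=
  {N : Set (Set (ZMod m)) | IsNested m N ∧ N.ncard = k ∧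
    Nat.card (rotStab m N) = d ∧ ∃ φ ∈ nestedStab m N, IsReflection m φ}.ncard

noncomputable def gammaNum (m d k : ℕ) : ℕ := alphaNum m d k + betaNum m d k

/-!
Every element of `D_m` is a rotation `x ↦ x + c` or a reflection `x ↦ c - x`. Call `x ∈ U` a
right endpoint of `U` if `x + 1 ∉ U`. Two distinct right endpoints are never joined by a walk
inside `U`, while a rotation by `c` preserving `U` maps a right endpoint `x` to the right endpoint
`x + c`. Hence a nontrivial rotation fixes no proper connected set and no component of a proper
invariant set. So the rotations `R` in the stabilizer, a cyclic group of order `d`, act freely on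
`N` and on the components of `⋃₀ N` (which is proper by (N3)), and `d` divides both counts. If the
stabilizer contains a reflection `s`, then `s` inverts `R` and the stabilizer is `R ∪ sR ≅ D_d`;
otherwise it is `R`.
-/

open Set Subgroup

section DihedralPresentation

variable {G : Type*} [Group G] {a b : G}

noncomputable def zmodOrderOfMulEquivZPowers (a : G) :
    Multiplicative (ZMod (orderOf a)) ≃* zpowers a :=
  zmodMulEquivOfGenerator (g := ⟨a, mem_zpowers a⟩)
    (fun x => mem_zpowers_iff.mpr (by simpa [Subtype.ext_iff] using mem_zpowers_iff.mp x.2))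
    (Nat.card_zpowers a)

/-- `a ^ i`, which is well defined for `i : ZMod (orderOf a)`. -/
noncomputable def zmodPow (a : G) (i : ZMod (orderOf a)) : G :=
  zmodOrderOfMulEquivZPowers a (.ofAdd i)

lemma zmodPow_mem_zpowers (i : ZMod (orderOf a)) : zmodPow a i ∈ zpowers a := Subtype.prop _

lemma zmodPow_eq_one_iff {i : ZMod (orderOf a)} : zmodPow a i = 1 ↔ i = 0 := by
  simp [zmodPow]

lemma exists_zmodPow_eq {g : G} (hg : g ∈ zpowers a) : ∃ i, zmodPow a i = g :=
  ⟨((zmodOrderOfMulEquivZPowers a).symm ⟨g, hg⟩).toAdd, by simp [zmodPow]⟩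

lemma zmodPow_add (i j : ZMod (orderOf a)) : zmodPow a (i + j) = zmodPow a i * zmodPow a j := by
  simp [zmodPow, ofAdd_add]

lemma zmodPow_sub (i j : ZMod (orderOf a)) :
    zmodPow a (j - i) = (zmodPow a i)⁻¹ * zmodPow a j := by
  rw [eq_inv_mul_iff_mul_eq, ← zmodPow_add, add_sub_cancel]

lemma mul_eq_mul_inv_of_mem_zpowers (hb : b * b = 1) (hab : b * a * b = a⁻¹) {g : G}
    (hg : g ∈ zpowers a) : g * b = b * g⁻¹ := by
  obtain ⟨k, rfl⟩ := mem_zpowers_iff.mp hg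
  have hconj := conj_zpow (i := k) (a := b) (b := a)
  rw [inv_eq_of_mul_eq_one_right hb, hab, inv_zpow] at hconj
  rw [hconj, ← mul_assoc, ← mul_assoc, hb, one_mul]

noncomputable def dihedralGroupHom (hb : b * b = 1) (hab : b * a * b = a⁻¹) :
    DihedralGroup (orderOf a) →* G where
  toFun
    | .r i => zmodPow a i
    | .sr i => b * zmodPow a i
  map_one' := show zmodPow a 0 = 1 from zmodPow_eq_one_iff.mpr rfl
  map_mul' := by
    have hcomm i := mul_eq_mul_inv_of_mem_zpowers hb hab (zmodPow_mem_zpowers i)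
    rintro (i | i) (j | j)
    · exact zmodPow_add i j
    · simp only [DihedralGroup.r_mul_sr, zmodPow_sub, ← mul_assoc, ← hcomm]
    · simp only [DihedralGroup.sr_mul_r, zmodPow_add, mul_assoc]
    · show zmodPow a (j - i) = b * zmodPow a i * (b * zmodPow a j)
      rw [zmodPow_sub, ← mul_assoc, mul_assoc b, hcomm, ← mul_assoc, hb, one_mul]

section

variable (hb : b * b = 1) (hab : b * a * b = a⁻¹)

@[simp]
lemma dihedralGroupHom_r (i : ZMod (orderOf a)) :
    dihedralGroupHom hb hab (.r i) = zmodPow a i := rfl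

@[simp]
lemma dihedralGroupHom_sr (i : ZMod (orderOf a)) :
    dihedralGroupHom hb hab (.sr i) = b * zmodPow a i := rfl

lemma injective_dihedralGroupHom (hba : b ∉ zpowers a) :
    Function.Injective (dihedralGroupHom hb hab) := by
  refine (injective_iff_map_eq_one _).mpr ?_
  rintro (i | i) h
  · rw [zmodPow_eq_one_iff.mp h, DihedralGroup.r_zero]
  · exact absurd (eq_inv_of_mul_eq_one_left h ▸ inv_mem (zmodPow_mem_zpowers i)) hba

lemma mem_range_dihedralGroupHom {g : G} :
    g ∈ (dihedralGroupHom hb hab).range ↔ g ∈ zpowers a ∨ b * g ∈ zpowers a := by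
  have hbb (g : G) : b * (b * g) = g := by rw [← mul_assoc, hb, one_mul]
  constructor
  · rintro ⟨i | i, rfl⟩
    · exact .inl (zmodPow_mem_zpowers i)
    · exact .inr ((hbb _).symm ▸ zmodPow_mem_zpowers i)
  · rintro (hg | hg)
    · obtain ⟨i, rfl⟩ := exists_zmodPow_eq hg
      exact ⟨.r i, rfl⟩
    · obtain ⟨i, hi⟩ := exists_zmodPow_eq hg
      exact ⟨.sr i, by rw [dihedralGroupHom_sr, hi, hbb]⟩

end

theorem Subgroup.nonempty_mulEquiv_dihedralGroup {K : Subgroup G} (hb : b * b = 1)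
    (hab : b * a * b = a⁻¹) (hba : b ∉ zpowers a)
    (hK : ∀ g, g ∈ K ↔ g ∈ zpowers a ∨ b * g ∈ zpowers a) :
    Nonempty (K ≃* DihedralGroup (orderOf a)) := by
  have hrange : (dihedralGroupHom hb hab).range = K := by
    ext g
    rw [mem_range_dihedralGroupHom, hK]
  exact ⟨((MonoidHom.ofInjective (injective_dihedralGroupHom hb hab hba)).trans
    (MulEquiv.subgroupCongr hrange)).symm⟩

end DihedralPresentation

theorem Nat.card_dvd_card_of_isCancelSMul (G X : Type*) [Group G] [MulAction G X]
    [IsCancelSMul G X] : Nat.card G ∣ Nat.card X := by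
  rw [Nat.card_congr (MulAction.selfEquivOrbitsQuotientProd
    (IsCancelSMul.stabilizer_eq_bot (G := G) (α := X))), Nat.card_prod]
  exact Nat.dvd_mul_left _ _

theorem SimpleGraph.card_dvd_card_connectedComponent {V G : Type*} [Group G] [MulAction G V]
    (Γ : SimpleGraph V) (hadj : ∀ (g : G) {u v : V}, Γ.Adj u v → Γ.Adj (g • u) (g • v))
    (hfree : ∀ (g : G) (v : V), Γ.Reachable v (g • v) → g = 1) :
    Nat.card G ∣ Nat.card Γ.ConnectedComponent := by
  let σ (g : G) : Γ →g Γ := ⟨(g • ·), hadj g⟩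
  let : MulAction G Γ.ConnectedComponent :=
    { smul g C := C.map (σ g)
      one_smul C := C.ind fun v => by
        change (Γ.connectedComponentMk v).map (σ 1) = _
        rw [ConnectedComponent.map_mk]
        exact congrArg _ (one_smul G v)
      mul_smul g h C := C.ind fun v => by
        change (Γ.connectedComponentMk v).map (σ (g * h)) =
          ((Γ.connectedComponentMk v).map (σ h)).map (σ g)
        simp only [ConnectedComponent.map_mk]
        exact congrArg _ (mul_smul g h v) }
  have : IsCancelSMul G Γ.ConnectedComponent :=
    isCancelSMul_iff_eq_one_of_smul_eq.mpr fun g C => C.ind fun v h =>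
      hfree g v (ConnectedComponent.exact h).symm
  exact Nat.card_dvd_card_of_isCancelSMul G _

section CycleGraph

variable {m : ℕ}

lemma cycleGraph_adj_add_right {x y : ZMod m} (c : ZMod m) :
    (cycleGraph m).Adj (x + c) (y + c) ↔ (cycleGraph m).Adj x y := by
  simp only [cycleGraph, ← add_right_comm _ (1 : ZMod m) c, add_left_inj, ne_eq]

lemma cycleGraph_adj_add_one [Fact (1 < m)] (x : ZMod m) : (cycleGraph m).Adj x (x + 1) :=
  ⟨by simp, .inl rfl⟩

lemma eq_univ_of_add_one_mem [NeZero m] {T : Set (ZMod m)} {v : ZMod m} (hv : v ∈ T)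
    (hT : ∀ x ∈ T, x + 1 ∈ T) : T = univ := by
  have hvn (n : ℕ) : v + n ∈ T := by
    induction n with
    | zero => simpa using hv
    | succ n ih => simpa [add_assoc] using hT _ ih
  refine eq_univ_of_forall fun x => ?_
  simpa [ZMod.natCast_zmod_val] using hvn (x - v).val

lemma exists_reachable_add_one_notMem [Fact (1 < m)] {U : Set (ZMod m)} (hU : U ≠ univ)
    {v : ZMod m} (hv : v ∈ U) :
    ∃ x, ∃ hx : x ∈ U, x + 1 ∉ U ∧ ((cycleGraph m).induce U).Reachable ⟨v, hv⟩ ⟨x, hx⟩ := by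
  by_contra! h
  apply hU
  have hT : {x | ∃ hx : x ∈ U, ((cycleGraph m).induce U).Reachable ⟨v, hv⟩ ⟨x, hx⟩} = univ := by
    refine eq_univ_of_add_one_mem ⟨hv, .rfl⟩ fun x ⟨hx, hvx⟩ => ?_
    have hx1 : x + 1 ∈ U := by_contra fun hx1 => h x hx hx1 hvx
    exact ⟨hx1, hvx.trans (SimpleGraph.Adj.reachable (cycleGraph_adj_add_one x))⟩
  rw [eq_univ_iff_forall] at hT ⊢
  exact fun x => (hT x).1

lemma ZMod.val_add_one_eq_or [NeZero m] (t : ZMod m) : (t + 1).val = t.val + 1 ∨ t + 1 = 0 := by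
  refine or_iff_not_imp_right.mpr fun h => ?_
  have hlt : t.val + 1 < m := lt_of_le_of_ne (ZMod.val_lt t) fun hm => h <| by
    rw [← ZMod.natCast_zmod_val t, ← Nat.cast_add_one, hm, ZMod.natCast_self]
  rw [← ZMod.val_cast_of_lt hlt, Nat.cast_add_one, ZMod.natCast_zmod_val]

lemma eq_of_reachable_of_add_one_notMem [Fact (1 < m)] {U : Set (ZMod m)} {x y : ZMod m}
    (hx : x ∈ U) (hy : y ∈ U) (hx1 : x + 1 ∉ U) (hy1 : y + 1 ∉ U)
    (h : ((cycleGraph m).induce U).Reachable ⟨y, hy⟩ ⟨x, hx⟩) : x = y := by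
  by_contra hxy
  obtain ⟨p⟩ := h
  -- A walk from `y` to `x` has to leave the arc `x + 1, x + 2, …, y`, measured by `k` below;
  -- but the only edges leaving it are `{y, y + 1}` and `{x, x + 1}`, which are not in `U`.
  let k (z : ZMod m) : ℕ := (z - (x + 1)).val
  have hk_succ (z : ZMod m) : k (z + 1) = k z + 1 ∨ z = x := by
    rcases ZMod.val_add_one_eq_or (z - (x + 1)) with h | h
    · exact .inl (by simpa [k, add_sub_right_comm] using h)
    · exact .inr (by linear_combination h)
  have hk_inj {z z' : ZMod m} (h : k z = k z') : z = z' := by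
    simpa using ZMod.val_injective m h
  have hky : k y < k x := by
    have hkx : k x = m - 1 := by simp [k, ZMod.neg_val, ZMod.val_one]
    have : k (y + 1) < m := ZMod.val_lt _
    rcases hk_succ y with h | h
    · omega
    · exact absurd h.symm hxy
  obtain ⟨⟨⟨u, w⟩, hadj⟩, -, hu, hw⟩ :=
    p.exists_boundary_dart {z | k z.1 ≤ k y} (le_refl (k y)) (not_le.mpr hky)
  simp only [mem_ofPred_eq, not_le] at hu hw
  obtain ⟨-, hwu | huw⟩ : (cycleGraph m).Adj u w := hadj
  · rcases hk_succ u with h | h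
    · rw [← hwu] at h
      have : u.1 = y := hk_inj (by omega)
      exact hy1 (this ▸ hwu ▸ w.2)
    · exact hx1 (h ▸ hwu ▸ w.2)
  · rcases hk_succ w with h | h
    · rw [← huw] at h
      omega
    · exact hx1 (h ▸ huw ▸ u.2)

lemma eq_zero_of_reachable_add [Fact (1 < m)] {U : Set (ZMod m)} (hU : U ≠ univ) {c : ZMod m}
    (hUc : ∀ x, x + c ∈ U ↔ x ∈ U) {v : ZMod m} (hv : v ∈ U)
    (h : ((cycleGraph m).induce U).Reachable ⟨v, hv⟩ ⟨v + c, (hUc v).mpr hv⟩) : c = 0 := by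
  obtain ⟨x, hx, hx1, hvx⟩ := exists_reachable_add_one_notMem hU hv
  let τ : (cycleGraph m).induce U →g (cycleGraph m).induce U :=
    ⟨fun z => ⟨z + c, (hUc z).mpr z.2⟩, (cycleGraph_adj_add_right c).mpr⟩
  have hxc : x = x + c := eq_of_reachable_of_add_one_notMem hx ((hUc x).mpr hx) hx1
    (by rwa [add_right_comm, hUc]) ((hvx.map τ).symm.trans (h.symm.trans hvx))
  simpa using hxc

lemma isConnSubset_univ [Fact (1 < m)] : IsConnSubset m univ := by
  rw [IsConnSubset, (cycleGraph m).induceUnivIso.connected_iff,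
    SimpleGraph.connected_iff_exists_forall_reachable]
  have h : {x | (cycleGraph m).Reachable 0 x} = univ :=
    eq_univ_of_add_one_mem (v := 0) .rfl fun x hx => hx.trans (cycleGraph_adj_add_one x).reachable
  exact ⟨0, fun x => (h ▸ mem_univ x : x ∈ {x | (cycleGraph m).Reachable 0 x})⟩

/-- The maximal members of a nested set are pairwise disjoint, so by (N3) they cannot cover the
connected set `univ` unless there is only one of them, which is proper. -/
lemma IsNested.sUnion_ne_univ [Fact (1 < m)] {N : Set (Set (ZMod m))} (hN : IsNested m N) :
    ⋃₀ N ≠ univ := by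
  obtain ⟨hfin, hmem, hlam, hdisj⟩ := hN
  let M := {I | Maximal (· ∈ N) I}
  have hMN : M ⊆ N := fun I hI => hI.prop
  have hM : ⋃₀ M = ⋃₀ N := (sUnion_mono hMN).antisymm <| sUnion_subset fun I hI =>
    (hfin.exists_le_maximal hI).elim fun J hJ => hJ.1.trans (subset_sUnion_of_mem hJ.2)
  rw [← hM]
  rcases M.subsingleton_or_nontrivial with hsub | ⟨I, hI, J, hJ, hIJ⟩
  · rcases hsub.eq_empty_or_singleton with h | ⟨I, h⟩
    · rw [h, sUnion_empty]
      exact empty_ne_univ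
    · rw [h, sUnion_singleton]
      exact (hmem I (hMN (h ▸ rfl))).2.1
  · intro hU
    have hMfin := hfin.subset hMN
    refine hdisj hMfin.toFinset (by simpa using hMN) ?_ ?_ ?_
    · exact Finset.one_lt_card.mpr ⟨I, by simpa using hI, J, by simpa using hJ, hIJ⟩
    · rw [hMfin.coe_toFinset]
      intro I' hI' J' hJ' hne
      rcases hlam I' (hMN hI') J' (hMN hJ') with h | h | h
      · exact absurd (hI'.eq_of_le (hMN hJ') h) hne
      · exact absurd (hJ'.eq_of_le (hMN hI') h).symm hne
      · exact h
    · convert (isConnSubset_univ (m := m))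
      rw [← hU, sUnion_eq_biUnion]
      simp

end CycleGraph

section Dihedral

variable {m : ℕ}

lemma mem_zpowers_rot_iff {g : Equiv.Perm (ZMod m)} :
    g ∈ zpowers (rot m) ↔ ∃ c, g = Equiv.addRight c := by
  simp only [mem_zpowers_iff, rot, Equiv.zsmul_addRight, zsmul_one]
  constructor
  · rintro ⟨k, rfl⟩
    exact ⟨_, rfl⟩
  · rintro ⟨c, rfl⟩
    obtain ⟨k, rfl⟩ := ZMod.intCast_surjective c
    exact ⟨k, rfl⟩

lemma exists_eq_addRight_or_subLeft_of_mem_dihedral {g : Equiv.Perm (ZMod m)}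
    (hg : g ∈ dihedral m) : (∃ c, g = Equiv.addRight c) ∨ ∃ c, g = Equiv.subLeft c := by
  induction hg using closure_induction with
  | mem g hg =>
    rcases hg with rfl | rfl
    · exact .inl ⟨1, rfl⟩
    · exact .inr ⟨0, by ext; simp [cycRefl]⟩
  | one => exact .inl ⟨0, Equiv.addRight_zero.symm⟩
  | mul g h _ _ hg hh =>
    rcases hg with ⟨a, rfl⟩ | ⟨a, rfl⟩ <;> rcases hh with ⟨b, rfl⟩ | ⟨b, rfl⟩
    · exact .inl ⟨b + a, by ext; simp [add_assoc]⟩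
    · exact .inr ⟨b + a, by ext; simp; ring⟩
    · exact .inr ⟨a - b, by ext; simp; ring⟩
    · exact .inl ⟨a - b, by ext; simp; ring⟩
  | inv g _ hg =>
    rcases hg with ⟨a, rfl⟩ | ⟨a, rfl⟩
    · exact .inl ⟨-a, by ext; simp [Equiv.Perm.inv_def]⟩
    · exact .inr ⟨a, by ext; simp [Equiv.Perm.inv_def]; ring⟩

lemma eq_one_of_reachable_smul [Fact (1 < m)] {g : Equiv.Perm (ZMod m)}
    (hg : g ∈ zpowers (rot m)) {U : Set (ZMod m)} (hU : U ≠ univ) (hgU : g • U = U)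
    {v : ZMod m} (hv : v ∈ U) (hgv : g v ∈ U)
    (h : ((cycleGraph m).induce U).Reachable ⟨v, hv⟩ ⟨g v, hgv⟩) : g = 1 := by
  obtain ⟨c, rfl⟩ := mem_zpowers_rot_iff.mp hg
  have hUc (x : ZMod m) : x + c ∈ U ↔ x ∈ U := by
    conv_lhs => rw [← hgU]
    exact smul_mem_smul_set_iff
  rw [eq_zero_of_reachable_add hU hUc hv h, Equiv.addRight_zero]

end Dihedral

section Stabilizer

variable {m : ℕ} {N : Set (Set (ZMod m))}

lemma rotStab_le_stabilizer : rotStab m N ≤ MulAction.stabilizer (Equiv.Perm (ZMod m)) N :=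
  inf_le_right.trans inf_le_right

lemma card_rotStab_dvd_ncard [Fact (1 < m)]
    (hN : ∀ I ∈ N, I.Nonempty ∧ I ≠ univ ∧ IsConnSubset m I) :
    Nat.card (rotStab m N) ∣ N.ncard := by
  let := MulAction.compHom N (inclusion (rotStab_le_stabilizer (N := N)))
  have : IsCancelSMul (rotStab m N) N := isCancelSMul_iff_eq_one_of_smul_eq.mpr fun g I hgI => by
    have hgI : (g : Equiv.Perm (ZMod m)) • I.1 = I.1 := congrArg Subtype.val hgI
    obtain ⟨⟨v, hv⟩, hI, hconn⟩ := hN I I.2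
    have hgv : (g : Equiv.Perm (ZMod m)) v ∈ I.1 := hgI ▸ smul_mem_smul_set hv
    exact Subtype.ext (eq_one_of_reachable_smul (mem_inf.mp g.2).1 hI hgI hv hgv
      (hconn.preconnected _ _))
  rw [← Nat.card_coe_set_eq]
  exact Nat.card_dvd_card_of_isCancelSMul _ _

lemma card_rotStab_dvd_card_connectedComponent [Fact (1 < m)] (hN : IsNested m N) :
    Nat.card (rotStab m N) ∣ Nat.card ((cycleGraph m).induce (⋃₀ N)).ConnectedComponent := by
  have hRU : rotStab m N ≤ MulAction.stabilizer (Equiv.Perm (ZMod m)) (⋃₀ N) := fun g hg => by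
    have hgN : g • N = N := rotStab_le_stabilizer hg
    rw [MulAction.mem_stabilizer_iff, smul_set_sUnion]
    conv_rhs => rw [← hgN]
    ext; simp [mem_smul_set]
  let := MulAction.compHom (⋃₀ N : Set (ZMod m)) (inclusion hRU)
  refine SimpleGraph.card_dvd_card_connectedComponent _ (fun g u v huv => ?_) fun g v hv => ?_
  · obtain ⟨c, hc⟩ := mem_zpowers_rot_iff.mp (mem_inf.mp g.2).1
    change (cycleGraph m).Adj ((g : Equiv.Perm (ZMod m)) u) ((g : Equiv.Perm (ZMod m)) v)
    rw [hc]
    exact (cycleGraph_adj_add_right c).mpr huv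
  · exact Subtype.ext
      (eq_one_of_reachable_smul (mem_inf.mp g.2).1 hN.sUnion_ne_univ (hRU g.2) v.2 _ hv)

lemma nonempty_nestedStab_mulEquiv_dihedralGroup {ρ s : Equiv.Perm (ZMod m)}
    (hρ : rotStab m N = zpowers ρ) (hs : s ∈ nestedStab m N) (hs' : s ∉ zpowers (rot m)) :
    Nonempty (nestedStab m N ≃* DihedralGroup (Nat.card (rotStab m N))) := by
  have hmem {g} : g ∈ zpowers ρ ↔ g ∈ zpowers (rot m) ∧ g ∈ nestedStab m N := by
    rw [← hρ]; exact mem_inf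
  rw [hρ, Nat.card_zpowers]
  obtain ⟨a, rfl⟩ := mem_zpowers_rot_iff.mp (hmem.mp (mem_zpowers ρ)).1
  obtain ⟨c, rfl⟩ := (exists_eq_addRight_or_subLeft_of_mem_dihedral (mem_inf.mp hs).1).resolve_left
      fun ⟨c, hc⟩ => hs' (mem_zpowers_rot_iff.mpr ⟨c, hc⟩)
  refine Subgroup.nonempty_mulEquiv_dihedralGroup (by ext; simp) (by ext; simp; ring)
    (fun h => hs' (hmem.mp h).1) fun g => ⟨fun hg => ?_, ?_⟩
  · rcases exists_eq_addRight_or_subLeft_of_mem_dihedral (mem_inf.mp hg).1 with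
      ⟨b, rfl⟩ | ⟨b, rfl⟩
    · exact .inl (hmem.mpr ⟨mem_zpowers_rot_iff.mpr ⟨b, rfl⟩, hg⟩)
    · exact .inr (hmem.mpr ⟨mem_zpowers_rot_iff.mpr ⟨c - b, by ext; simp; ring⟩, mul_mem hs hg⟩)
  · rintro (hg | hg)
    · exact (hmem.mp hg).2
    · exact (mul_mem_cancel_left hs).mp (hmem.mp hg).2

end Stabilizer

theorem stabilizer_cyclic_or_dihedral_general (m : ℕ) (hm : 3 ≤ m)
    (N : Set (Set (ZMod m))) (hN : IsNested m N) :
    ∃ d : ℕ, 0 < d ∧ d ∣ N.ncard ∧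
      d ∣ Nat.card ((cycleGraph m).induce (⋃₀ N)).ConnectedComponent ∧
      ((∃ ρ ∈ Subgroup.zpowers (rot m), nestedStab m N = Subgroup.zpowers ρ ∧
          Nat.card (nestedStab m N) = d) ∨
        Nonempty ((nestedStab m N) ≃* DihedralGroup d)) := by
  have : Fact (1 < m) := ⟨by omega⟩
  have : IsCyclic (rotStab m N) := isCyclic_of_le inf_le_left
  obtain ⟨ρ, hρ⟩ := (rotStab m N).isCyclic_iff_exists_zpowers_eq_top.mp inferInstance
  refine ⟨Nat.card (rotStab m N), Nat.card_pos, card_rotStab_dvd_ncard hN.2.1,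
    card_rotStab_dvd_card_connectedComponent hN, ?_⟩
  by_cases h : nestedStab m N ≤ zpowers (rot m)
  · have hK : nestedStab m N = rotStab m N := (inf_eq_right.mpr h).symm
    exact .inl ⟨ρ, (mem_inf.mp (hρ ▸ mem_zpowers ρ)).1, hK.trans hρ.symm, by rw [hK]⟩
  · obtain ⟨s, hs, hs'⟩ := SetLike.not_le_iff_exists.mp h
    exact .inr (nonempty_nestedStab_mulEquiv_dihedralGroup hρ.symm hs hs')

theorem stabilizer_cyclic_or_dihedral (m : ℕ) (hm : 3 ≤ m)
    (N : Set (Set (ZMod m))) (hN : IsNested m N) (hne : N.Nonempty) :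
    ∃ d : ℕ, 0 < d ∧ d ∣ N.ncard ∧
      d ∣ Nat.card ((cycleGraph m).induce (⋃₀ N)).ConnectedComponent ∧
      ((∃ ρ ∈ Subgroup.zpowers (rot m), nestedStab m N = Subgroup.zpowers ρ ∧
          Nat.card (nestedStab m N) = d) ∨
        Nonempty ((nestedStab m N) ≃* DihedralGroup d)) :=
  stabilizer_cyclic_or_dihedral_general m hm N hN
end

section
/- Let N be a nonempty nested set of C_m whose stabilizer (D_m)_N equals the cyclic group ⟨σ_{m/d}⟩ of order d (in particular it contains no reflection), where d divides m. Then for every positive divisor ℓ of d, the following identity of formal power series in ℚ⟦t⟧ holds: Σ_{q ≥ 1} c_q t^q = (ℓ/d) · Σ_{r | d/ℓ} μ(r) · (t^{rℓ}/(1 − t^{rℓ}))^{|N|/(rℓ)}, where c_q is the number of (D_m)_N-orbits of exponent vectors on N of degree q whose isotropy group has order exactly ℓ, the sum is over positive divisors r of d/ℓ, and μ is the classical number-theoretic Möbius function. -/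
open Pointwise

noncomputable def vecDeg (m : ℕ) (N : Set (Set (ZMod m))) (a : Set (ZMod m) → ℕ) : ℕ :=
  ∑ᶠ I ∈ N, a I

def IsExpVec (m : ℕ) (N : Set (Set (ZMod m))) (a : Set (ZMod m) → ℕ) : Prop :=
  (∀ I ∈ N, 0 < a I) ∧ (∀ I ∉ N, a I = 0)

def vecIso (m : ℕ) (N : Set (Set (ZMod m))) (a : Set (ZMod m) → ℕ) :
    Set (Equiv.Perm (ZMod m)) :=
  {φ | φ ∈ nestedStab m N ∧ ∀ I ∈ N, a (φ • I) = a I}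

def vecOrbit (m : ℕ) (N : Set (Set (ZMod m))) (a : Set (ZMod m) → ℕ) :
    Set (Set (ZMod m) → ℕ) :=
  {b | ∃ φ ∈ nestedStab m N, b = fun J => a (φ⁻¹ • J)}

/-!
The stabilizer `⟨ρ⟩`, `ρ = σ_{m/d}`, consists of rotations, and a rotation mapping a connected
proper subset of the cycle to itself is the identity, because it must fix the subset's unique
"left endpoint" (a point `u` of the subset with `u - 1` outside it). So `⟨ρ⟩` acts freely on `N`.
Hence the exponent vectors fixed by the subgroup of order `e` are the positive functions on its
`|N| / e` orbits, all of size `e`, and their generating function is `(t^e / (1 - t^e))^(|N| / e)`.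
The isotropy group of an exponent vector `a` is `⟨ρ^p⟩`, of order `d / p`, where `p` is the
period of `a` under `ρ`; it contains the subgroup of order `e` iff `p ∣ d / e`. Möbius inversion
over the divisors of `d / ℓ` therefore counts the vectors of period `d / ℓ`, i.e. with isotropy of
order `ℓ`, and each of their orbits has `d / ℓ` elements.
-/

open Finset PowerSeries MulAction
open scoped ArithmeticFunction.Moebius Classical

/- Permutations act on exponent vectors by `(φ • a) J = a (φ⁻¹ • J)`, as in `vecOrbit`. -/
attribute [local instance] arrowAction

theorem card_filter_eq_sum_moebius {α R : Type*} [Ring R] (V : Finset α) (t : α → ℕ) {n : ℕ}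
    (hn : 0 < n) :
    (#{v ∈ V | t v = n} : R) = ∑ r ∈ n.divisors, (μ r : R) * #{v ∈ V | t v ∣ n / r} := by
  have hdiv : ∀ n > 0, ∑ i ∈ n.divisors, (#{v ∈ V | t v = i} : R) = #{v ∈ V | t v ∣ n} := by
    intro n hn
    rw [card_eq_sum_card_fiberwise (f := t) (t := n.divisors) fun v hv => by
      simpa [hn.ne'] using (mem_filter.mp hv).2, Nat.cast_sum]
    refine sum_congr rfl fun i hi => ?_
    rw [filter_filter, filter_congr fun v _ => show t v = i ↔ t v ∣ n ∧ t v = i from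
      ⟨fun h => ⟨h ▸ Nat.dvd_of_mem_divisors hi, h⟩, And.right⟩]
  rw [← ArithmeticFunction.sum_eq_iff_sum_mul_moebius_eq.mp hdiv n hn,
    Nat.sum_divisorsAntidiagonal (fun a b => (μ a : R) * #{v ∈ V | t v ∣ b})]

theorem card_eq_card_image_mul {α ι : Type*} {N : Finset α} {π : α → ι} {e : ℕ}
    (hπ : ∀ I ∈ N, #{J ∈ N | π J = π I} = e) : #N = #(N.image π) * e := by
  rw [card_eq_sum_card_image π N, ← smul_eq_mul, ← sum_const]
  refine sum_congr rfl fun O hO => ?_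
  obtain ⟨I, hI, rfl⟩ := mem_image.mp hO
  exact hπ I hI

section Orbits
variable {G α : Type*} [Group G] [MulAction G α]

theorem card_filter_orbit_eq {W : Finset α} {w : α} (hw : orbit G w ⊆ W) :
    #{u ∈ W | orbit G u = orbit G w} = (orbit G w).ncard := by
  rw [← Set.ncard_coe_finset]
  congr 1
  ext u
  simp only [coe_filter, Set.mem_ofPred_eq, orbit_eq_iff]
  exact ⟨And.right, fun h => ⟨hw h, h⟩⟩

theorem ncard_orbit_zpowers (a : G) (b : α) :
    (orbit (Subgroup.zpowers a) b).ncard = period a b := by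
  rw [← Nat.card_coe_set_eq, Nat.card_congr (orbitZPowersEquiv a b), Nat.card_zmod]
  rfl

theorem card_stabilizer_zpowers_mul_period (a : G) (b : α) :
    Nat.card (stabilizer (Subgroup.zpowers a) b) * period a b = orderOf a := by
  rw [← ncard_orbit_zpowers, ← index_stabilizer, Subgroup.card_mul_index, Nat.card_zpowers]

theorem card_stabilizer_zpowers_eq_iff {a : G} (ha : 0 < orderOf a) {ℓ : ℕ} (hℓ : ℓ ∣ orderOf a)
    (b : α) : Nat.card (stabilizer (Subgroup.zpowers a) b) = ℓ ↔ period a b = orderOf a / ℓ := by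
  have hmul := card_stabilizer_zpowers_mul_period a b
  have hℓ0 : 0 < ℓ := Nat.pos_of_dvd_of_pos hℓ ha
  constructor
  · intro h
    rw [h] at hmul
    exact Nat.eq_div_of_mul_eq_right hℓ0.ne' hmul
  · intro h
    rw [h] at hmul
    exact Nat.eq_of_mul_eq_mul_right (Nat.div_pos (Nat.le_of_dvd ha hℓ) hℓ0)
      (hmul.trans (Nat.mul_div_cancel' hℓ).symm)

theorem period_eq_orderOf {a : G} {b : α} (h : ∀ n : ℕ, a ^ n • b = b → a ^ n = 1) :
    period a b = orderOf a :=
  Nat.dvd_antisymm (period_dvd_orderOf a b)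
    (orderOf_dvd_of_pow_eq_one (h _ (pow_period_smul a b)))

end Orbits

section GeneratingFunction
variable {k : Type*} [Field k]

theorem X_pow_mul_inv_one_sub_X_pow {e : ℕ} (he : 0 < e) :
    (X ^ e * (1 - X ^ e)⁻¹ : k⟦X⟧) = mk fun n => if n ≠ 0 ∧ e ∣ n then 1 else 0 := by
  set T : k⟦X⟧ := mk fun n => if e ∣ n then 1 else 0
  have hshift : X ^ e * T = T - 1 := by
    ext n
    rw [coeff_X_pow_mul', map_sub, coeff_mk, coeff_one]
    rcases Nat.eq_zero_or_pos n with rfl | hn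
    · simp [T, he.ne']
    · by_cases hen : e ≤ n
      · simp [T, hen, hn.ne', Nat.dvd_sub_iff_left hen dvd_rfl]
      · simp [T, hen, hn.ne', Nat.not_dvd_of_pos_of_lt hn (not_le.mp hen)]
  have hinv : T = (1 - X ^ e)⁻¹ := by
    refine (eq_inv_iff_mul_eq_one (by simp [he.ne'])).mpr ?_
    rw [mul_sub, mul_one, mul_comm, hshift, sub_sub_cancel]
  rw [← hinv, hshift]
  ext n
  by_cases hn : n = 0 <;> simp [T, hn]

theorem coeff_prod_eq_sum_piAntidiag {ι : Type*} (f : ι → k⟦X⟧) (s : Finset ι) (q : ℕ) :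
    coeff q (∏ i ∈ s, f i) = ∑ l ∈ s.piAntidiag q, ∏ i ∈ s, coeff (l i) (f i) := by
  rw [coeff_prod, finsuppAntidiag, sum_map]
  exact sum_attach (s.piAntidiag q) fun l => ∏ i ∈ s, coeff (l i) (f i)

theorem coeff_X_pow_mul_inv_one_sub_X_pow_pow {ι : Type*} {e : ℕ} (he : 0 < e) (s : Finset ι)
    (q : ℕ) : coeff q ((X ^ e * (1 - X ^ e)⁻¹ : k⟦X⟧) ^ #s) =
      #{l ∈ s.piAntidiag q | ∀ i ∈ s, l i ≠ 0 ∧ e ∣ l i} := by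
  rw [← prod_const, coeff_prod_eq_sum_piAntidiag, X_pow_mul_inv_one_sub_X_pow he]
  simp only [coeff_mk, prod_ite_zero, prod_const_one, sum_boole]

end GeneratingFunction

section ExponentVectors
variable {α ι : Type*}

noncomputable def expVecs (N : Finset α) (q : ℕ) : Finset (α → ℕ) :=
  {v ∈ N.piAntidiag q | ∀ I ∈ N, v I ≠ 0}

theorem mem_expVecs {N : Finset α} {q : ℕ} {v : α → ℕ} :
    v ∈ expVecs N q ↔ (N.sum v = q ∧ ∀ I, v I ≠ 0 → I ∈ N) ∧ ∀ I ∈ N, v I ≠ 0 := by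
  rw [expVecs, mem_filter, mem_piAntidiag]

theorem apply_eq_zero_of_mem_expVecs {N : Finset α} {q : ℕ} {v : α → ℕ} (hv : v ∈ expVecs N q)
    {I : α} (hI : I ∉ N) : v I = 0 := by
  by_contra h
  exact hI ((mem_expVecs.mp hv).1.2 I h)

theorem expVecs_zero {N : Finset α} (hN : N.Nonempty) : expVecs N 0 = ∅ := by
  refine eq_empty_of_forall_notMem fun v hv => ?_
  obtain ⟨⟨hsum, -⟩, hpos⟩ := mem_expVecs.mp hv
  obtain ⟨I, hI⟩ := hN
  exact hpos I hI ((sum_eq_zero_iff.mp hsum) I hI)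

noncomputable def fiberSum (N : Finset α) (π : α → ι) (v : α → ℕ) (O : ι) : ℕ :=
  ∑ J ∈ N with π J = O, v J

variable {N : Finset α} {π : α → ι} {e : ℕ}

theorem sum_fiberSum (v : α → ℕ) : ∑ O ∈ N.image π, fiberSum N π v O = N.sum v :=
  sum_fiberwise_of_maps_to (fun _ hI => mem_image_of_mem π hI) v

theorem fiberSum_eq_zero {O : ι} (hO : O ∉ N.image π) (v : α → ℕ) : fiberSum N π v O = 0 :=
  sum_eq_zero fun J hJ => absurd (mem_image.mpr ⟨J, (mem_filter.mp hJ).1, (mem_filter.mp hJ).2⟩) hO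

theorem fiberSum_apply_eq_mul (hπ : ∀ I ∈ N, #{J ∈ N | π J = π I} = e) {I : α} (hI : I ∈ N)
    {v : α → ℕ} {c : ℕ} (hv : ∀ J ∈ N, π J = π I → v J = c) : fiberSum N π v (π I) = e * c := by
  rw [fiberSum, sum_congr rfl fun J hJ => hv J (mem_filter.mp hJ).1 (mem_filter.mp hJ).2,
    sum_const, hπ I hI, smul_eq_mul]

/- Summing over the fibres is a bijection onto the functions on the fibres with nonzero values
divisible by `e`; the inverse divides by `e` and spreads the value evenly over the fibre. -/
theorem card_expVecs_filter_constOnFibers (hπ : ∀ I ∈ N, #{J ∈ N | π J = π I} = e)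
    (he : 0 < e) (q : ℕ) :
    #{v ∈ expVecs N q | ∀ I ∈ N, ∀ J ∈ N, π I = π J → v I = v J} =
      #{l ∈ (N.image π).piAntidiag q | ∀ O ∈ N.image π, l O ≠ 0 ∧ e ∣ l O} := by
  set spread : (ι → ℕ) → α → ℕ := fun l I => if I ∈ N then l (π I) / e else 0
  have hspread : ∀ l : ι → ℕ, (∀ O, l O ≠ 0 → O ∈ N.image π) →
      (∀ O ∈ N.image π, e ∣ l O) → fiberSum N π (spread l) = l := by
    intro l hsupp hdvd
    funext O
    by_cases hO : O ∈ N.image π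
    · obtain ⟨I, hI, rfl⟩ := mem_image.mp hO
      rw [fiberSum_apply_eq_mul hπ hI (c := l (π I) / e) fun J hJ hJI => by
        simp [spread, hJ, hJI], Nat.mul_div_cancel' (hdvd _ hO)]
    · rw [fiberSum_eq_zero hO]
      by_contra h
      exact hO (hsupp O (Ne.symm h))
  refine card_nbij' (fiberSum N π) spread (fun v hv => ?_) (fun l hl => ?_) (fun v hv => ?_)
    (fun l hl => ?_) <;>
    simp only [coe_filter, Set.mem_ofPred_eq, mem_expVecs, mem_piAntidiag] at *
  · obtain ⟨⟨⟨hsum, -⟩, hpos⟩, hconst⟩ := hv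
    refine ⟨⟨by rw [sum_fiberSum, hsum], fun O hO => ?_⟩, fun O hO => ?_⟩
    · by_contra h
      exact hO (fiberSum_eq_zero h v)
    · obtain ⟨I, hI, rfl⟩ := mem_image.mp hO
      rw [fiberSum_apply_eq_mul hπ hI fun J hJ hJI => hconst J hJ I hI hJI]
      exact ⟨mul_ne_zero he.ne' (hpos I hI), dvd_mul_right _ _⟩
  · obtain ⟨⟨hsum, hsupp⟩, hdvd⟩ := hl
    refine ⟨⟨⟨?_, fun I hI => ?_⟩, fun I hI => ?_⟩,
      fun I hI J hJ hIJ => by simp [spread, hI, hJ, hIJ]⟩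
    · rw [← sum_fiberSum, hspread l hsupp fun O hO => (hdvd O hO).2, hsum]
    · by_contra hIN
      exact hI (if_neg hIN)
    · obtain ⟨hne, hdvd⟩ := hdvd (π I) (mem_image_of_mem π hI)
      simp only [spread, if_pos hI]
      exact (Nat.div_pos (Nat.le_of_dvd (Nat.pos_of_ne_zero hne) hdvd) he).ne'
  · obtain ⟨⟨⟨-, hsupp⟩, -⟩, hconst⟩ := hv
    funext I
    by_cases hI : I ∈ N
    · simp only [spread, if_pos hI]
      rw [fiberSum_apply_eq_mul hπ hI fun J hJ hJI => hconst J hJ I hI hJI,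
        Nat.mul_div_cancel_left _ he]
    · simp only [spread, if_neg hI]
      by_contra h
      exact hI (hsupp I (Ne.symm h))
  · exact hspread l hl.1.2 fun O hO => (hl.2 O hO).2

end ExponentVectors

section CyclicAction
variable {H α : Type*} [Group H] [MulAction H α]

theorem smul_mem_iff_of_smul_eq {g : H} {N : Set α} (hg : g • N = N) {I : α} :
    g • I ∈ N ↔ I ∈ N := by
  conv_lhs => rw [← hg]
  exact Set.smul_mem_smul_set_iff

theorem smul_eq_of_mem_zpowers {ρ : H} {N : Set α} (hρN : ρ • N = N) {g : H}
    (hg : g ∈ Subgroup.zpowers ρ) : g • N = N :=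
  mem_stabilizer_iff.mp (Subgroup.zpowers_le.mpr (mem_stabilizer_iff.mpr hρN) hg)

theorem orbit_zpowers_subset {ρ : H} {N : Set α} (hρN : ρ • N = N) {I : α} (hI : I ∈ N) :
    orbit (Subgroup.zpowers ρ) I ⊆ N := by
  rintro _ ⟨g, rfl⟩
  exact (smul_mem_iff_of_smul_eq (smul_eq_of_mem_zpowers hρN g.2)).mpr hI

theorem smul_eq_self_iff_of_smul_eq {g : H} {N : Set α} (hg : g • N = N) {v : α → ℕ}
    (hv : ∀ I ∉ N, v I = 0) : g • v = v ↔ ∀ I ∈ N, v (g • I) = v I := by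
  constructor
  · intro h I _
    rw [← congrFun h (g • I)]
    exact congrArg v (inv_smul_smul g I)
  · intro h
    funext J
    show v (g⁻¹ • J) = v J
    by_cases hJ : g⁻¹ • J ∈ N
    · simpa using (h _ hJ).symm
    · have hJ' : J ∉ N := fun hJN =>
        hJ ((smul_mem_iff_of_smul_eq hg).mp (by rwa [smul_inv_smul]))
      rw [hv _ hJ, hv _ hJ']

theorem smul_eq_self_iff_forall_orbit_eq {ψ : H} {N : Finset α} (hψN : ψ • (N : Set α) = N)
    {v : α → ℕ} (hv : ∀ I ∉ N, v I = 0) :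
    ψ • v = v ↔ ∀ I ∈ N, ∀ J ∈ N,
      orbit (Subgroup.zpowers ψ) I = orbit (Subgroup.zpowers ψ) J → v I = v J := by
  rw [smul_eq_self_iff_of_smul_eq hψN hv]
  constructor
  · intro h I _ J hJ hIJ
    obtain ⟨g, rfl⟩ := mem_orbit_iff.mp (orbit_eq_iff.mp hIJ)
    have hgv : (g : H) • v = v :=
      mem_stabilizer_iff.mp (Subgroup.zpowers_le.mpr (mem_stabilizer_iff.mpr
        ((smul_eq_self_iff_of_smul_eq hψN hv).mpr h)) g.2)
    exact (smul_eq_self_iff_of_smul_eq (smul_eq_of_mem_zpowers hψN g.2) hv).mp hgv J hJ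
  · intro h I hI
    exact h _ ((smul_mem_iff_of_smul_eq hψN).mpr hI) I hI
      (orbit_smul (⟨ψ, Subgroup.mem_zpowers ψ⟩ : Subgroup.zpowers ψ) I)

theorem smul_mem_expVecs {g : H} {N : Finset α} (hg : g • (N : Set α) = N) {q : ℕ}
    {v : α → ℕ} (hv : v ∈ expVecs N q) : g • v ∈ expVecs N q := by
  have hmem : ∀ I, g⁻¹ • I ∈ N ↔ I ∈ N := fun I => by
    exact_mod_cast smul_mem_iff_of_smul_eq (inv_smul_eq_iff.mpr hg.symm) (I := I)
  obtain ⟨⟨hsum, hsupp⟩, hpos⟩ := mem_expVecs.mp hv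
  refine mem_expVecs.mpr ⟨⟨?_, fun I hI => (hmem I).mp (hsupp _ hI)⟩,
    fun I hI => hpos _ ((hmem I).mpr hI)⟩
  rw [← hsum]
  exact sum_nbij' (g⁻¹ • ·) (g • ·) (fun I hI => (hmem I).mpr hI)
    (fun I hI => by simpa using (smul_mem_iff_of_smul_eq hg).mpr hI)
    (fun I _ => smul_inv_smul g I) (fun I _ => inv_smul_smul g I) (fun I _ => rfl)

variable {k : Type*} [Field k] {ρ : H} {N : Finset α}

theorem card_filter_smul_eq_self_expVecs (hρN : ρ • (N : Set α) = N)
    (hfree : ∀ I ∈ N, ∀ n : ℕ, ρ ^ n • I = I → ρ ^ n = 1) (hd : 0 < orderOf ρ) {e : ℕ}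
    (he : e ∣ orderOf ρ) (q : ℕ) :
    (#{v ∈ expVecs N q | ρ ^ (orderOf ρ / e) • v = v} : k) =
      coeff q ((X ^ e * (1 - X ^ e)⁻¹ : k⟦X⟧) ^ (#N / e)) := by
  set ψ := ρ ^ (orderOf ρ / e)
  have he0 : 0 < e := Nat.pos_of_dvd_of_pos he hd
  have hψN : ψ • (N : Set α) = N := smul_eq_of_mem_zpowers hρN (Subgroup.npow_mem_zpowers _ _)
  have hfib : ∀ I ∈ N,
      #{J ∈ N | orbit (Subgroup.zpowers ψ) J = orbit (Subgroup.zpowers ψ) I} = e := by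
    intro I hI
    rw [card_filter_orbit_eq (orbit_zpowers_subset hψN hI), ncard_orbit_zpowers,
      period_eq_orderOf fun n hn => ?_, orderOf_pow_orderOf_div hd.ne' he]
    rw [← pow_mul] at hn ⊢
    exact hfree I hI _ hn
  rw [card_eq_card_image_mul hfib, Nat.mul_div_cancel _ he0,
    coeff_X_pow_mul_inv_one_sub_X_pow_pow he0, ← card_expVecs_filter_constOnFibers hfib he0 q]
  congr 2
  exact filter_congr fun v hv =>
    smul_eq_self_iff_forall_orbit_eq hψN fun I => apply_eq_zero_of_mem_expVecs hv

theorem card_image_orbit_filter_period_eq [CharZero k] (hρN : ρ • (N : Set α) = N)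
    (hfree : ∀ I ∈ N, ∀ n : ℕ, ρ ^ n • I = I → ρ ^ n = 1) (hd : 0 < orderOf ρ) {ℓ : ℕ}
    (hℓ : ℓ ∣ orderOf ρ) (q : ℕ) :
    (#({v ∈ expVecs N q | period ρ v = orderOf ρ / ℓ}.image (orbit (Subgroup.zpowers ρ))) : k) =
      (ℓ / orderOf ρ : k) * ∑ r ∈ (orderOf ρ / ℓ).divisors,
        (μ r : k) * coeff q ((X ^ (r * ℓ) * (1 - X ^ (r * ℓ))⁻¹ : k⟦X⟧) ^ (#N / (r * ℓ))) := by
  set d := orderOf ρ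
  set W := {v ∈ expVecs N q | period ρ v = d / ℓ}
  have hℓ0 : 0 < ℓ := Nat.pos_of_dvd_of_pos hℓ hd
  have hWorbit : ∀ w ∈ W, orbit (Subgroup.zpowers ρ) w ⊆ W := by
    intro w hw u hu
    obtain ⟨hwV, hwp⟩ := mem_filter.mp hw
    obtain ⟨g, rfl⟩ := mem_orbit_iff.mp hu
    refine mem_filter.mpr ⟨smul_mem_expVecs (smul_eq_of_mem_zpowers hρN g.2) hwV, ?_⟩
    rw [← ncard_orbit_zpowers, orbit_smul, ncard_orbit_zpowers, hwp]
  have hW : #W = #(W.image (orbit (Subgroup.zpowers ρ))) * (d / ℓ) :=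
    card_eq_card_image_mul fun w hw => by
      have hcard := card_filter_orbit_eq (hWorbit w hw)
      rw [ncard_orbit_zpowers, (mem_filter.mp hw).2] at hcard
      convert hcard
  have hfix : ∀ r ∈ (d / ℓ).divisors, (#{v ∈ expVecs N q | period ρ v ∣ d / ℓ / r} : k) =
      coeff q ((X ^ (r * ℓ) * (1 - X ^ (r * ℓ))⁻¹ : k⟦X⟧) ^ (#N / (r * ℓ))) := by
    intro r hr
    have hrℓ : r * ℓ ∣ d := by
      rw [mul_comm]
      exact Nat.mul_dvd_of_dvd_div hℓ (Nat.dvd_of_mem_divisors hr)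
    rw [Nat.div_div_eq_div_mul, mul_comm ℓ r,
      ← card_filter_smul_eq_self_expVecs hρN hfree hd hrℓ]
    congr 2
    exact filter_congr fun v _ => pow_smul_eq_iff_period_dvd.symm
  have hmob := card_filter_eq_sum_moebius (R := k) (expVecs N q) (period ρ)
    (Nat.div_pos (Nat.le_of_dvd hd hℓ) hℓ0)
  rw [sum_congr rfl fun r hr => by rw [hfix r hr]] at hmob
  have hℓk : (ℓ : k) ≠ 0 := by exact_mod_cast hℓ0.ne'
  have hdk : (d : k) ≠ 0 := by exact_mod_cast hd.ne'
  rw [← hmob, hW, Nat.cast_mul, Nat.cast_div hℓ hℓk]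
  field_simp

end CyclicAction

section Cycle
variable {m : ℕ}

theorem exists_mem_sub_one_notMem [NeZero m] {I : Set (ZMod m)} (hne : I.Nonempty)
    (hI : I ≠ Set.univ) : ∃ u ∈ I, u - 1 ∉ I := by
  by_contra! h
  obtain ⟨x, hx⟩ := hne
  have hsub : ∀ k : ℕ, x - k ∈ I := by
    intro k
    induction k with
    | zero => simpa using hx
    | succ k ih => simpa [sub_add_eq_sub_sub] using h _ ih
  exact hI (Set.eq_univ_of_forall fun y => by simpa using hsub (x - y).val)

variable [Fact (1 < m)]

theorem ZMod.val_add_one_of_add_one_ne_zero {a : ZMod m} (h : a + 1 ≠ 0) :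
    (a + 1).val = a.val + 1 := by
  have hlt : a.val + 1 < m := by
    by_contra hge
    apply h
    have hm : a.val + 1 = m := by
      have := ZMod.val_lt a
      omega
    rw [← ZMod.val_eq_zero, ZMod.val_add, ZMod.val_one, hm, Nat.mod_self]
  rw [ZMod.val_add_of_lt (by rwa [ZMod.val_one]), ZMod.val_one]

/- `f` measures the distance from `u - 1`, which a walk inside `I` never crosses, so along such
a walk `f` moves by `±1`; the first step of a walk from `u` reaching the level `f w` enters `w`
from `w - 1`. -/
theorem eq_of_mem_of_sub_one_notMem {I : Set (ZMod m)} (hI : IsConnSubset m I)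
    {u w : ZMod m} (hu : u ∈ I) (hu' : u - 1 ∉ I) (hw : w ∈ I) (hw' : w - 1 ∉ I) : u = w := by
  by_contra huw
  set f : ZMod m → ℕ := fun z => (z - (u - 1)).val
  have hf_inj : ∀ {a b}, f a = f b → a = b := fun h => sub_left_inj.mp (ZMod.val_injective m h)
  have hf_succ : ∀ a, a + 1 ∈ I → f (a + 1) = f a + 1 := by
    intro a ha
    have hne : a + 1 - (u - 1) ≠ 0 := sub_ne_zero.mpr fun h => hu' (h ▸ ha)
    simp only [f]
    rw [← sub_add_eq_add_sub] at hne ⊢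
    exact ZMod.val_add_one_of_add_one_ne_zero hne
  have hfw : 1 < f w := by
    have hfu : f u = 1 := by simp [f, ZMod.val_one]
    have hf0 : f (u - 1) = 0 := by simp [f]
    have hw0 : f w ≠ f (u - 1) := fun h => hu' (hf_inj h ▸ hw)
    have hw1 : f w ≠ f u := fun h => huw (hf_inj h).symm
    omega
  obtain ⟨p⟩ := hI.preconnected ⟨u, hu⟩ ⟨w, hw⟩
  obtain ⟨⟨⟨⟨a, ha⟩, ⟨b, hb⟩⟩, hadj⟩, -, hlt, hge⟩ :=
    p.exists_boundary_dart {z | f z.1 < f w} (by simpa [f, ZMod.val_one] using hfw) (by simp)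
  simp only [Set.mem_ofPred_eq, not_lt] at hlt hge
  rcases (show (cycleGraph m).Adj a b from hadj).2 with rfl | rfl
  · have hfb : f (a + 1) = f w := by
      rw [hf_succ a hb] at hge ⊢
      omega
    exact hw' (by rwa [← hf_inj hfb, add_sub_cancel_right])
  · rw [hf_succ b ha] at hlt
    omega

theorem addRight_smul_eq_self {I : Set (ZMod m)} (hne : I.Nonempty) (hI : I ≠ Set.univ)
    (hconn : IsConnSubset m I) {c : ZMod m} (h : Equiv.addRight c • I = I) : c = 0 := by
  have hmem : ∀ x, x + c ∈ I ↔ x ∈ I := fun x => by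
    conv_rhs => rw [← Set.smul_mem_smul_set_iff (a := Equiv.addRight c), h]
    rfl
  obtain ⟨u, hu, hu'⟩ := exists_mem_sub_one_notMem hne hI
  have := eq_of_mem_of_sub_one_notMem hconn hu hu' ((hmem u).mpr hu)
    (by rwa [add_sub_right_comm, hmem])
  simpa using this.symm

theorem IsNested.eq_one_of_smul_eq_self {N : Set (Set (ZMod m))} (hN : IsNested m N)
    {I : Set (ZMod m)} (hI : I ∈ N) {g : Equiv.Perm (ZMod m)} (hg : g ∈ Subgroup.zpowers (rot m))
    (h : g • I = I) : g = 1 := by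
  obtain ⟨hne, huniv, hconn⟩ := hN.2.1 I hI
  obtain ⟨k, rfl⟩ := Subgroup.mem_zpowers_iff.mp hg
  rw [rot, Equiv.zsmul_addRight] at h ⊢
  rw [addRight_smul_eq_self hne huniv hconn h, Equiv.addRight_zero]

end Cycle

section NestedSets
variable {m : ℕ}

theorem isExpVec_and_vecDeg_eq_iff {N : Finset (Set (ZMod m))} {v : Set (ZMod m) → ℕ}
    {q : ℕ} : IsExpVec m N v ∧ vecDeg m N v = q ↔ v ∈ expVecs N q := by
  rw [mem_expVecs, IsExpVec, vecDeg, finsum_mem_coe_finset]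
  simp only [mem_coe, Nat.pos_iff_ne_zero]
  constructor
  · rintro ⟨⟨hpos, hzero⟩, hsum⟩
    exact ⟨⟨hsum, fun I => not_imp_comm.mp (hzero I)⟩, hpos⟩
  · rintro ⟨⟨hsum, hsupp⟩, hpos⟩
    exact ⟨⟨hpos, fun I => not_imp_comm.mp (hsupp I)⟩, hsum⟩

theorem vecOrbit_eq_orbit (N : Set (Set (ZMod m))) (v : Set (ZMod m) → ℕ) :
    vecOrbit m N v = orbit (nestedStab m N) v := by
  ext b
  constructor
  · rintro ⟨φ, hφ, rfl⟩
    exact ⟨⟨φ, hφ⟩, rfl⟩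
  · rintro ⟨g, rfl⟩
    exact ⟨g, g.2, rfl⟩

theorem ncard_vecIso {N : Set (Set (ZMod m))} {v : Set (ZMod m) → ℕ} (hv : ∀ I ∉ N, v I = 0) :
    (vecIso m N v).ncard = Nat.card (stabilizer (nestedStab m N) v) := by
  have hiso : vecIso m N v =
      Subtype.val '' (stabilizer (nestedStab m N) v : Set (nestedStab m N)) := by
    ext φ
    constructor
    · rintro ⟨hφ, h⟩
      exact ⟨⟨φ, hφ⟩, (smul_eq_self_iff_of_smul_eq hφ.2 hv).mpr h, rfl⟩
    · rintro ⟨g, hg, rfl⟩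
      exact ⟨g.2, (smul_eq_self_iff_of_smul_eq g.2.2 hv).mp hg⟩
  rw [hiso, Set.ncard_image_of_injective _ Subtype.val_injective]
  exact (Nat.card_coe_set_eq _).symm

theorem setOf_vecOrbit_eq_image_orbit {N : Finset (Set (ZMod m))} {ρ : Equiv.Perm (ZMod m)}
    (hstab : nestedStab m N = Subgroup.zpowers ρ) (hd : 0 < orderOf ρ) {ℓ : ℕ}
    (hℓ : ℓ ∣ orderOf ρ) (q : ℕ) :
    {O | ∃ v, IsExpVec m N v ∧ vecDeg m N v = q ∧ (vecIso m N v).ncard = ℓ ∧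
      O = vecOrbit m N v} =
      ↑({v ∈ expVecs N q | period ρ v = orderOf ρ / ℓ}.image (orbit (Subgroup.zpowers ρ))) := by
  have hiso : ∀ v ∈ expVecs N q, (vecIso m N v).ncard = ℓ ↔ period ρ v = orderOf ρ / ℓ :=
    fun v hv => by
      rw [ncard_vecIso fun I => apply_eq_zero_of_mem_expVecs hv, hstab,
        card_stabilizer_zpowers_eq_iff hd hℓ]
  ext O
  simp only [Set.mem_ofPred_eq, coe_image, coe_filter, Set.mem_image]
  constructor
  · rintro ⟨v, hexp, hdeg, hv, rfl⟩
    have hvV := isExpVec_and_vecDeg_eq_iff.mp ⟨hexp, hdeg⟩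
    exact ⟨v, ⟨hvV, (hiso v hvV).mp hv⟩, by rw [vecOrbit_eq_orbit, hstab]⟩
  · rintro ⟨v, ⟨hvV, hv⟩, rfl⟩
    obtain ⟨hexp, hdeg⟩ := isExpVec_and_vecDeg_eq_iff.mpr hvV
    exact ⟨v, hexp, hdeg, (hiso v hvV).mpr hv, by rw [vecOrbit_eq_orbit, hstab]⟩

end NestedSets

theorem hilbert_cyclic_isotropy_general (m d ℓ : ℕ) (hm : 3 ≤ m) (hd0 : 0 < d)
    (N : Set (Set (ZMod m))) (hN : IsNested m N) (hne : N.Nonempty)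
    (hstab : nestedStab m N = Subgroup.zpowers ((rot m) ^ (m / d)))
    (hcard : Nat.card (nestedStab m N) = d)
    (hl : ℓ ∣ d) :
    (PowerSeries.mk fun q => if q = 0 then (0 : ℚ) else
      ({O : Set (Set (ZMod m) → ℕ) | ∃ v, IsExpVec m N v ∧ vecDeg m N v = q ∧
        (vecIso m N v).ncard = ℓ ∧ O = vecOrbit m N v}.ncard : ℚ))
    = PowerSeries.C (R := ℚ) ((ℓ : ℚ) / (d : ℚ)) *
        ∑ r ∈ (d / ℓ).divisors,
          PowerSeries.C (R := ℚ) ((ArithmeticFunction.moebius r : ℤ) : ℚ) *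
            (PowerSeries.X ^ (r * ℓ) *
              (1 - (PowerSeries.X : PowerSeries ℚ) ^ (r * ℓ))⁻¹) ^ (N.ncard / (r * ℓ)) := by
  have : Fact (1 < m) := ⟨by omega⟩
  obtain ⟨N, rfl⟩ := hN.1.exists_finset_coe
  set ρ := rot m ^ (m / d)
  have hd : orderOf ρ = d := by rwa [hstab, Nat.card_zpowers] at hcard
  have hρN : ρ • (N : Set (Set (ZMod m))) = N := (hstab ▸ Subgroup.mem_zpowers ρ).2
  have hfree : ∀ I ∈ N, ∀ n : ℕ, ρ ^ n • I = I → ρ ^ n = 1 := fun I hI n =>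
    hN.eq_one_of_smul_eq_self hI (pow_mem (Subgroup.npow_mem_zpowers _ _) _)
  ext q
  rw [← hd] at hl hd0 ⊢
  simp only [coeff_mk, coeff_C_mul, map_sum, setOf_vecOrbit_eq_image_orbit hstab hd0 hl,
    Set.ncard_coe_finset]
  rw [← card_image_orbit_filter_period_eq hρN hfree hd0 hl q]
  refine ite_eq_right_iff.mpr fun hq => ?_
  rw [hq, expVecs_zero (by simpa using hne), filter_empty, image_empty, card_empty, Nat.cast_zero]

theorem hilbert_cyclic_isotropy (m d ℓ : ℕ) (hm : 3 ≤ m) (hdm : d ∣ m) (hd0 : 0 < d)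
    (N : Set (Set (ZMod m))) (hN : IsNested m N) (hne : N.Nonempty)
    (hstab : nestedStab m N = Subgroup.zpowers ((rot m) ^ (m / d)))
    (hcard : Nat.card (nestedStab m N) = d)
    (hl : ℓ ∣ d) (hl0 : 0 < ℓ) :
    (PowerSeries.mk fun q => if q = 0 then (0 : ℚ) else
      ({O : Set (Set (ZMod m) → ℕ) | ∃ v, IsExpVec m N v ∧ vecDeg m N v = q ∧
        (vecIso m N v).ncard = ℓ ∧ O = vecOrbit m N v}.ncard : ℚ))
    = PowerSeries.C (R := ℚ) ((ℓ : ℚ) / (d : ℚ)) *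
        ∑ r ∈ (d / ℓ).divisors,
          PowerSeries.C (R := ℚ) ((ArithmeticFunction.moebius r : ℤ) : ℚ) *
            (PowerSeries.X ^ (r * ℓ) *
              (1 - (PowerSeries.X : PowerSeries ℚ) ^ (r * ℓ))⁻¹) ^ (N.ncard / (r * ℓ)) :=
  hilbert_cyclic_isotropy_general m d ℓ hm hd0 N hN hne hstab hcard hl
end
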